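/- arXiv:1402.5555 — 3 statements merged into one kernel-verified Lean document; each statement's English description precedes it below -/
import Mathlib

section
/- The natural map A ⊗_{k[s]} 𝔅' → k(s) induced by multiplication, a ⊗ b ↦ a·b, is injective with image equal to A. In particular, A ⊗_{k[s]} 𝔅' is a free A-module of rank 1; i.e., the restriction of 𝔅' away from the integers is invertible. -/
open TensorProduct

/-- The `k[s]`-submodule `𝔅'` of `k(s)` generated by the elements `1/(s+i)` for `i ∈ ℤ`. -/
noncomputable def Bprime (k : Type*) [Field k] : Submodule (Polynomial k) (RatFunc k) :=
  Submodule.span (Polynomial k) {x : RatFunc k | ∃ i : ℤ, x = (RatFunc.X + (i : RatFunc k))⁻¹}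

/-- The localization `A` of `k[s]` away from `ℤ`, realized as the `k[s]`-subalgebra (hence
`k`-subalgebra) of `k(s)` generated by the elements `(s - i)⁻¹` for `i ∈ ℤ`. -/
noncomputable def Aloc (k : Type*) [Field k] : Subalgebra (Polynomial k) (RatFunc k) :=
  Algebra.adjoin (Polynomial k) {x : RatFunc k | ∃ i : ℤ, x = (RatFunc.X - (i : RatFunc k))⁻¹}

/-- `A` regarded as a `k[s]`-submodule of `k(s)`. -/
noncomputable def AlocM (k : Type*) [Field k] : Submodule (Polynomial k) (RatFunc k) :=
  Subalgebra.toSubmodule (Aloc k)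

/-- The multiplication map `A ⊗_{k[s]} 𝔅' → k(s)`, `a ⊗ b ↦ a·b`. -/
noncomputable def mulMapA (k : Type*) [Field k] [CharZero k] :
    (↥(AlocM k) ⊗[Polynomial k] ↥(Bprime k)) →ₗ[Polynomial k] RatFunc k :=
  TensorProduct.lift
    (((LinearMap.mul (Polynomial k) (RatFunc k)).compl₂ (Bprime k).subtype).comp
      (AlocM k).subtype)

section aux

variable (k : Type*) [Field k]

lemma algebraMap_X_add_int (i : ℤ) :
    algebraMap (Polynomial k) (RatFunc k) (Polynomial.X + (i : Polynomial k)) =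
      RatFunc.X + (i : RatFunc k) := by
  rw [map_add, RatFunc.algebraMap_X, map_intCast]

lemma X_add_int_ne_zero (i : ℤ) : (RatFunc.X + (i : RatFunc k)) ≠ 0 := by
  rw [← algebraMap_X_add_int]
  apply RatFunc.algebraMap_ne_zero
  simpa using Polynomial.X_add_C_ne_zero (R := k) (i : k)

lemma gen_mem_Aloc (i : ℤ) : (RatFunc.X + (i : RatFunc k))⁻¹ ∈ Aloc k := by
  refine Algebra.subset_adjoin ⟨-i, ?_⟩
  push_cast
  ring_nf

lemma one_mem_Bprime : (1 : RatFunc k) ∈ Bprime k := by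
  have hg : (RatFunc.X + ((0 : ℤ) : RatFunc k))⁻¹ ∈
      {x : RatFunc k | ∃ i : ℤ, x = (RatFunc.X + (i : RatFunc k))⁻¹} := ⟨0, rfl⟩
  have := Submodule.smul_mem (Bprime k) (Polynomial.X + ((0 : ℤ) : Polynomial k))
    (Submodule.subset_span hg)
  have hval : (Polynomial.X + ((0 : ℤ) : Polynomial k)) •
      (RatFunc.X + ((0 : ℤ) : RatFunc k))⁻¹ = (1 : RatFunc k) := by
    rw [Algebra.smul_def, algebraMap_X_add_int, mul_inv_cancel₀ (X_add_int_ne_zero k 0)]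
  rwa [hval] at this

end aux

noncomputable def oneB (k : Type*) [Field k] : ↥(Bprime k) := ⟨1, one_mem_Bprime k⟩

lemma key (k : Type*) [Field k] [CharZero k]
    (t : ↥(AlocM k) ⊗[Polynomial k] ↥(Bprime k)) :
    ∃ a : ↥(AlocM k), t = a ⊗ₜ[Polynomial k] oneB k := by
  induction t using TensorProduct.induction_on with
  | zero => exact ⟨0, by simp⟩
  | add x y hx hy =>
    obtain ⟨a, rfl⟩ := hx
    obtain ⟨b, rfl⟩ := hy
    exact ⟨a + b, by rw [add_tmul]⟩
  | tmul a b =>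
    obtain ⟨b, hb⟩ := b
    induction hb using Submodule.span_induction generalizing a with
    | mem x hx =>
      obtain ⟨i, rfl⟩ := hx
      have hxA : (RatFunc.X + (i : RatFunc k))⁻¹ * (a : RatFunc k) ∈ AlocM k :=
        (Aloc k).mul_mem (gen_mem_Aloc k i) a.2
      refine ⟨⟨_, hxA⟩, ?_⟩
      have h1 : oneB k = (Polynomial.X + (i : Polynomial k)) •
          (⟨(RatFunc.X + (i : RatFunc k))⁻¹, Submodule.subset_span ⟨i, rfl⟩⟩ :
            ↥(Bprime k)) := by
        apply Subtype.ext
        show (1 : RatFunc k) = (Polynomial.X + (i : Polynomial k)) • _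
        rw [Algebra.smul_def, algebraMap_X_add_int, mul_inv_cancel₀ (X_add_int_ne_zero k i)]
      rw [h1, tmul_smul, smul_tmul']
      congr 1
      apply Subtype.ext
      show (a : RatFunc k) = (Polynomial.X + (i : Polynomial k)) •
        ((RatFunc.X + (i : RatFunc k))⁻¹ * (a : RatFunc k))
      rw [Algebra.smul_def, algebraMap_X_add_int, ← mul_assoc,
        mul_inv_cancel₀ (X_add_int_ne_zero k i), one_mul]
    | zero =>
      exact ⟨0, by simp [show (⟨0, Submodule.zero_mem _⟩ : ↥(Bprime k)) = 0 from rfl]⟩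
    | add x y hx hy ihx ihy =>
      obtain ⟨a1, h1⟩ := ihx a
      obtain ⟨a2, h2⟩ := ihy a
      refine ⟨a1 + a2, ?_⟩
      have : (⟨x + y, Submodule.add_mem _ hx hy⟩ : ↥(Bprime k)) =
          ⟨x, hx⟩ + ⟨y, hy⟩ := rfl
      rw [this, tmul_add, h1, h2, add_tmul]
    | smul p x hx ih =>
      obtain ⟨a', h'⟩ := ih (p • a)
      refine ⟨a', ?_⟩
      have : (⟨p • x, Submodule.smul_mem _ p hx⟩ : ↥(Bprime k)) = p • ⟨x, hx⟩ := rfl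
      rw [this, tmul_smul, smul_tmul', h']

lemma mulMapA_tmul (k : Type*) [Field k] [CharZero k] (a : ↥(AlocM k)) (b : ↥(Bprime k)) :
    mulMapA k (a ⊗ₜ b) = (a : RatFunc k) * (b : RatFunc k) := rfl

/-- The map `A ⊗_{k[s]} 𝔅' → k(s)` induced by multiplication is injective with image `A`;
in particular the restriction of `𝔅'` away from the integers is invertible (free of rank 1). -/
theorem stmt5 (k : Type*) [Field k] [CharZero k] :
    Function.Injective (mulMapA k) ∧
    Set.range (mulMapA k) = (Aloc k : Set (RatFunc k)) := by
  constructor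
  · intro t t' h
    obtain ⟨a, rfl⟩ := key k t
    obtain ⟨a', rfl⟩ := key k t'
    rw [mulMapA_tmul, mulMapA_tmul] at h
    simp only [oneB, mul_one] at h
    exact congrArg (· ⊗ₜ[Polynomial k] oneB k) (Subtype.ext h)
  · ext x
    constructor
    · rintro ⟨t, rfl⟩
      obtain ⟨a, rfl⟩ := key k t
      rw [mulMapA_tmul]
      simp only [oneB, mul_one]; exact a.2
    · intro hx
      exact ⟨(⟨x, hx⟩ : ↥(AlocM k)) ⊗ₜ oneB k, by simp [mulMapA_tmul, oneB]⟩
end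

section
/- For every integer i, the quotient k[s]-module 𝔅'/𝔅_i is isomorphic to the direct sum, over all integers j ≠ i, of the skyscraper modules k[s]/(s−j); explicitly, the classes of the generators 1/(s−j) for j ≠ i induce an isomorphism ⊕_{j∈ℤ, j≠i} k[s]/(s−j) ≅ 𝔅'/𝔅_i. -/
/-!
The classes of the generators `1/(s-j)` span `𝔅'/𝔅ᵢ`, and `(s-j)` kills the class of `1/(s-j)`
because `(s-j) • 1/(s-j) = 1 = (s-i) • 1/(s-i) ∈ 𝔅ᵢ`; this gives a surjection
`⊕_{j ≠ i} k[s]/(s-j) → 𝔅'/𝔅ᵢ`. It is injective: if `∑ pⱼ/(s-j) = q/(s-i)`, taking the residue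
at `s = j` (the coefficient of `(s-j)⁻¹` in the Laurent expansion at `j`) gives `pⱼ(j) = 0`,
and in characteristic zero the integers `j` are distinct points of `k`.
-/

open DirectSum Polynomial

namespace RatFunc

variable {k : Type*} [Field k]

noncomputable def residueAt (a : k) : RatFunc k →+ k :=
  (HahnSeries.coeff.addMonoidHom (-1)).comp
    ((algebraMap (RatFunc k) (LaurentSeries k)).toAddMonoidHom.comp (laurent a).toAddMonoidHom)

theorem residueAt_apply (a : k) (f : RatFunc k) :
    residueAt a f = ((laurent a f : RatFunc k) : LaurentSeries k).coeff (-1) := rfl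

theorem laurent_smul_inv_X_sub_C (a c : k) (p : k[X]) :
    laurent a (p • (X - C c)⁻¹) = taylor a p • (X + C (a - c))⁻¹ := by
  simp only [Algebra.smul_def, map_mul, laurent_algebraMap, map_inv₀, map_sub, laurent_X,
    laurent_C, map_sub]
  ring_nf

theorem coe_algebraMap_eq_ofPowerSeries (p : k[X]) :
    ((algebraMap k[X] (RatFunc k) p : RatFunc k) : LaurentSeries k) =
      HahnSeries.ofPowerSeries ℤ k p :=
  (coe_coe p).symm

theorem residueAt_smul_inv_X_sub_C_self (a : k) (p : k[X]) :
    residueAt a (p • (X - C a)⁻¹) = p.eval a := by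
  have hX : (((X : RatFunc k)⁻¹ : RatFunc k) : LaurentSeries k) = HahnSeries.single (-1) 1 := by
    rw [map_inv₀, coe_X, HahnSeries.inv_single, inv_one]
  rw [residueAt_apply, laurent_smul_inv_X_sub_C, sub_self, map_zero, add_zero, Algebra.smul_def,
    map_mul, hX, coe_algebraMap_eq_ofPowerSeries]
  have h := HahnSeries.coeff_mul_single_add (r := (1 : k)) (a := 0) (b := -1)
    (x := HahnSeries.ofPowerSeries ℤ k (taylor a p))
  rw [zero_add, mul_one] at h
  rw [h, PowerSeries.coeff_coe, if_neg (lt_irrefl 0), Int.natAbs_zero, Polynomial.coeff_coe,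
    taylor_coeff_zero]

theorem residueAt_smul_inv_X_sub_C_of_ne {a c : k} (hac : a ≠ c) (p : k[X]) :
    residueAt a (p • (X - C c)⁻¹) = 0 := by
  set q : k[X] := Polynomial.X + Polynomial.C (a - c)
  have hq : PowerSeries.constantCoeff (q : PowerSeries k) ≠ 0 := by
    simpa [q, Polynomial.constantCoeff_coe] using sub_ne_zero_of_ne hac
  have hinv : (((X + C (a - c))⁻¹ : RatFunc k) : LaurentSeries k) =
      HahnSeries.ofPowerSeries ℤ k (q : PowerSeries k)⁻¹ := by
    rw [map_inv₀, ← algebraMap_X, ← algebraMap_C, ← map_add, coe_algebraMap_eq_ofPowerSeries]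
    refine inv_eq_of_mul_eq_one_right ?_
    rw [← map_mul, PowerSeries.mul_inv_cancel _ hq, map_one]
  rw [residueAt_apply, laurent_smul_inv_X_sub_C, Algebra.smul_def, map_mul, hinv,
    coe_algebraMap_eq_ofPowerSeries, ← map_mul]
  exact (PowerSeries.coeff_coe _ _).trans (if_pos (by norm_num))

theorem eval_eq_zero_of_smul_inv_X_sub_C_eq_sum {ι : Type*} {b : ι → k}
    (hb : Function.Injective b) {a : k} (ha : ∀ j, b j ≠ a) {q : k[X]} {s : Finset ι}
    {p : ι → k[X]} (h : q • (X - C a)⁻¹ = ∑ j ∈ s, p j • (X - C (b j))⁻¹) {j : ι} (hj : j ∈ s) :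
    (p j).eval (b j) = 0 := by
  have hres := congrArg (residueAt (b j)) h
  rwa [residueAt_smul_inv_X_sub_C_of_ne (ha j), map_sum,
    Finset.sum_eq_single_of_mem j hj fun l _ hlj ↦ residueAt_smul_inv_X_sub_C_of_ne
      (hb.ne hlj).symm _, residueAt_smul_inv_X_sub_C_self, eq_comm] at hres

end RatFunc

namespace Bprime

open Submodule

variable (k : Type*) [Field k]

theorem inv_X_sub_intCast_mem (j : ℤ) : (RatFunc.X - (j : RatFunc k))⁻¹ ∈ Bprime k :=
  subset_span ⟨-j, by rw [Int.cast_neg, sub_eq_add_neg]⟩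

noncomputable def gen (j : ℤ) : Bprime k :=
  ⟨(RatFunc.X - (j : RatFunc k))⁻¹, inv_X_sub_intCast_mem k j⟩

variable {k}

theorem coe_gen (j : ℤ) : (gen k j : RatFunc k) = (RatFunc.X - (j : RatFunc k))⁻¹ := rfl

theorem span_range_gen : span k[X] (Set.range (gen k)) = ⊤ := by
  have hrange : Set.range (gen k) =
      (↑) ⁻¹' {x : RatFunc k | ∃ i : ℤ, x = (RatFunc.X + (i : RatFunc k))⁻¹} := by
    ext x
    constructor
    · rintro ⟨j, rfl⟩
      exact ⟨-j, by rw [coe_gen, Int.cast_neg, sub_eq_add_neg]⟩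
    · rintro ⟨j, hj⟩
      exact ⟨-j, Subtype.ext (by rw [coe_gen, hj, Int.cast_neg, sub_neg_eq_add])⟩
  rw [hrange]
  exact span_span_coe_preimage

theorem coe_X_sub_intCast_smul_gen (j : ℤ) :
    (((X - (j : k[X])) • gen k j : Bprime k) : RatFunc k) = 1 := by
  have hX : algebraMap k[X] (RatFunc k) (X - (j : k[X])) = RatFunc.X - (j : RatFunc k) := by
    rw [map_sub, RatFunc.algebraMap_X, map_intCast]
  rw [Submodule.coe_smul, coe_gen, Algebra.smul_def, hX,
    mul_inv_cancel₀ (hX ▸ RatFunc.algebraMap_ne_zero (X_sub_C_ne_zero _))]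

theorem X_sub_intCast_smul_gen_eq (j j' : ℤ) :
    (X - (j : k[X])) • gen k j = (X - (j' : k[X])) • gen k j' :=
  Subtype.ext <| by rw [coe_X_sub_intCast_smul_gen, coe_X_sub_intCast_smul_gen]

variable (i : ℤ)

theorem X_sub_intCast_smul_mk_gen (j : ℤ) :
    (X - (j : k[X])) • (Submodule.Quotient.mk (gen k j) : Bprime k ⧸ k[X] ∙ gen k i) = 0 := by
  rw [← Submodule.Quotient.mk_smul, X_sub_intCast_smul_gen_eq j i, Submodule.Quotient.mk_eq_zero]
  exact smul_mem _ _ (mem_span_singleton_self _)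

noncomputable def directSumToQuotient :
    (⨁ j : {j : ℤ // j ≠ i}, k[X] ⧸ Ideal.span {X - ((j : ℤ) : k[X])}) →ₗ[k[X]]
      Bprime k ⧸ k[X] ∙ gen k i :=
  DirectSum.toModule _ _ _ fun j ↦ liftQSpanSingleton (X - ((j : ℤ) : k[X]))
    (LinearMap.toSpanSingleton k[X] _ (Submodule.Quotient.mk (gen k j)))
    (X_sub_intCast_smul_mk_gen i j)

theorem directSumToQuotient_of_mk (j : {j : ℤ // j ≠ i}) (p : k[X]) :
    directSumToQuotient i (DirectSum.of _ j (Ideal.Quotient.mk _ p)) =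
      Submodule.Quotient.mk (p • gen k j) := by
  rw [directSumToQuotient, ← DirectSum.lof_eq_of k[X], DirectSum.toModule_lof]
  rfl

theorem directSumToQuotient_surjective :
    Function.Surjective (directSumToQuotient (k := k) i) := by
  rw [← LinearMap.range_eq_top, eq_top_iff, ← range_mkQ, LinearMap.range_eq_map, ← span_range_gen,
    map_span, span_le]
  rintro _ ⟨_, ⟨j, rfl⟩, rfl⟩
  by_cases hj : j = i
  · subst hj
    rw [mkQ_apply, (Submodule.Quotient.mk_eq_zero _).2 (mem_span_singleton_self _)]
    exact zero_mem _
  · exact ⟨_, (directSumToQuotient_of_mk i ⟨j, hj⟩ 1).trans (congrArg _ (one_smul _ _))⟩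

theorem directSumToQuotient_injective [CharZero k] :
    Function.Injective (directSumToQuotient (k := k) i) := by
  classical
  refine (injective_iff_map_eq_zero _).2 fun x hx ↦ ?_
  choose p hp using fun j ↦ Ideal.Quotient.mk_surjective (x j)
  have hΦx :
      directSumToQuotient i x = Submodule.Quotient.mk (∑ j ∈ x.support, p j • gen k j) := by
    conv_lhs => rw [← DirectSum.sum_support_of x]
    simp only [map_sum, ← hp, directSumToQuotient_of_mk]
    exact (map_sum (mkQ _) _ _).symm
  rw [hΦx, Submodule.Quotient.mk_eq_zero, mem_span_singleton] at hx
  obtain ⟨q, hq⟩ := hx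
  have hfrac := congrArg Subtype.val hq
  simp only [Submodule.coe_smul, coe_sum, coe_gen,
    ← map_intCast (RatFunc.C : k →+* RatFunc k)] at hfrac
  refine DFinsupp.ext fun j ↦ ?_
  by_cases hj : j ∈ x.support
  · rw [DirectSum.zero_apply, ← hp j, Ideal.Quotient.eq_zero_iff_mem, Ideal.mem_span_singleton,
      ← map_intCast (C : k →+* k[X]), dvd_iff_isRoot]
    exact RatFunc.eval_eq_zero_of_smul_inv_X_sub_C_eq_sum
      (b := fun j : {j : ℤ // j ≠ i} ↦ (j : k))
      (fun _ _ h ↦ Subtype.ext (Int.cast_injective h)) (fun j h ↦ j.2 (Int.cast_injective h))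
      hfrac hj
  · exact DFinsupp.notMem_support_iff.mp hj

end Bprime

/-- For every integer `i`, the quotient `𝔅'/𝔅ᵢ` of `𝔅'` by the cyclic submodule `𝔅ᵢ`
generated by `1/(s-i)` is isomorphic to `⊕_{j ≠ i} k[s]/(s-j)`, via the isomorphism induced
by sending the generator of the `j`-th summand to the class of `1/(s-j)`. -/
theorem stmt7 (k : Type*) [Field k] [CharZero k] (i : ℤ)
    (hmem : ∀ j : ℤ, ((RatFunc.X : RatFunc k) - (j : RatFunc k))⁻¹ ∈ Bprime k) :
    ∃ e : (⨁ j : {j : ℤ // j ≠ i},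
          Polynomial k ⧸ Ideal.span {Polynomial.X - ((j : ℤ) : Polynomial k)})
        ≃ₗ[Polynomial k]
        (↥(Bprime k) ⧸ Submodule.span (Polynomial k)
          {(⟨((RatFunc.X : RatFunc k) - (i : RatFunc k))⁻¹, hmem i⟩ : ↥(Bprime k))}),
      ∀ j : {j : ℤ // j ≠ i},
        e (DirectSum.of
            (fun j : {j : ℤ // j ≠ i} =>
              Polynomial k ⧸ Ideal.span {Polynomial.X - ((j : ℤ) : Polynomial k)}) j
            (Ideal.Quotient.mk (Ideal.span {Polynomial.X - ((j : ℤ) : Polynomial k)}) 1)) =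
          Submodule.Quotient.mk
            (⟨((RatFunc.X : RatFunc k) - ((j : ℤ) : RatFunc k))⁻¹, hmem j⟩ : ↥(Bprime k)) :=
  ⟨.ofBijective (Bprime.directSumToQuotient i)
      ⟨Bprime.directSumToQuotient_injective i, Bprime.directSumToQuotient_surjective i⟩,
    fun j ↦ (Bprime.directSumToQuotient_of_mk i j 1).trans (congrArg _ (one_smul _ _))⟩
end

section
/- The ideal (t̃ − 1)·A⁰ equals the kernel of the augmentation homomorphism ε̂ : A⁰ → R; that is, an element x ∈ A⁰ satisfies ε̂(x) = 0 if and only if x = (t̃ − 1)·y for some y ∈ A⁰. -/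
/-- The directed set `D` of positive integers coprime to `p`. -/
def Coprimes (p : ℕ) : Type := {n : ℕ // 0 < n ∧ Nat.Coprime n p}

/-- The transition map `π_{m,n} : R[ℤ/m] → R[ℤ/n]` (for `n ∣ m`) induced by the reduction
map `ℤ/m → ℤ/n`. -/
noncomputable def transMap (R : Type*) [CommRing R] {m n : ℕ} (h : n ∣ m) :
    AddMonoidAlgebra R (ZMod m) →+* AddMonoidAlgebra R (ZMod n) :=
  AddMonoidAlgebra.mapDomainRingHom R ((ZMod.castHom h (ZMod n)).toAddMonoidHom)

/-- The property of being a compatible family, i.e., of lying in the inverse limit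
`A⁰ = lim_{n ∈ D} R[ℤ/n]`, realized inside the product ring `∏_{n ∈ D} R[ℤ/n]`. -/
def IsCompatible (R : Type*) [CommRing R] (p : ℕ)
    (x : ∀ n : Coprimes p, AddMonoidAlgebra R (ZMod n.1)) : Prop :=
  ∀ (m n : Coprimes p) (h : n.1 ∣ m.1), transMap R h (x m) = x n

/-- The element `t̃ ∈ A⁰` whose `n`-th component is the group element `1 ∈ ℤ/n` viewed in
`R[ℤ/n]`. -/
noncomputable def ttilde (R : Type*) [CommRing R] (p : ℕ) :
    ∀ n : Coprimes p, AddMonoidAlgebra R (ZMod n.1) :=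
  fun n => AddMonoidAlgebra.single (1 : ZMod n.1) (1 : R)

/-- The augmentation homomorphism `ε_n : R[ℤ/n] → R`, sending every group element to `1`. -/
noncomputable def aug (R : Type*) [CommRing R] (n : ℕ) :
    AddMonoidAlgebra R (ZMod n) →ₐ[R] R :=
  AddMonoidAlgebra.lift R R (ZMod n) 1

/-
In each finite group algebra `R[ℤ/n]` the augmentation ideal is generated by `t - 1`,
since `single g r - single 0 r = single 0 r * (t ^ g.val - 1)`. So for `x` in the kernel of `ε̂`
the sets `{y ∈ R[ℤ/n] : (t - 1) y = x_n}` are nonempty; they are finite because `R` is, and the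
transition maps carry them into one another. By König's lemma for cofiltered systems of finite
nonempty sets they admit a compatible family of elements, which is the required `y ∈ A⁰`.
-/

open CategoryTheory Opposite

instance AddMonoidAlgebra.finite {R G : Type*} [Semiring R] [Finite R] [Finite G] :
    Finite (AddMonoidAlgebra R G) :=
  Finite.of_injective _ (DFunLike.coe_injective.comp AddMonoidAlgebra.coeff_injective)

section GroupAlgebra

variable (R : Type*) [CommRing R]

lemma aug_single (n : ℕ) (a : ZMod n) (b : R) :
    aug R n (AddMonoidAlgebra.single a b) = b := by
  simp [aug, AddMonoidAlgebra.lift_single]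

lemma single_one_sub_one_dvd_sub_single_aug (n : ℕ) [NeZero n]
    (v : AddMonoidAlgebra R (ZMod n)) :
    AddMonoidAlgebra.single (1 : ZMod n) (1 : R) - 1 ∣
      v - AddMonoidAlgebra.single 0 (aug R n v) := by
  induction v using AddMonoidAlgebra.induction_linear with
  | zero => simp
  | add v w hv hw =>
    rw [map_add, AddMonoidAlgebra.single_add, add_sub_add_comm]
    exact dvd_add hv hw
  | single g r =>
    have hpow : AddMonoidAlgebra.single (1 : ZMod n) (1 : R) ^ g.val =
        AddMonoidAlgebra.single g 1 := by
      simp [AddMonoidAlgebra.single_pow]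
    have hfactor : AddMonoidAlgebra.single g r - AddMonoidAlgebra.single 0 r =
        AddMonoidAlgebra.single 0 r * (AddMonoidAlgebra.single g 1 - 1) := by
      rw [mul_sub, AddMonoidAlgebra.single_mul_single, zero_add, mul_one, mul_one]
    rw [aug_single, hfactor, ← hpow]
    exact (sub_one_dvd_pow_sub_one _ _).mul_left _

lemma transMap_single {m n : ℕ} (h : n ∣ m) (a : ZMod m) (b : R) :
    transMap R h (AddMonoidAlgebra.single a b) =
      AddMonoidAlgebra.single (ZMod.castHom h (ZMod n) a) b :=
  AddMonoidAlgebra.mapDomain_single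

lemma transMap_self (n : ℕ) : transMap R (dvd_refl n) = RingHom.id _ := by
  rw [transMap, ZMod.castHom_self]
  exact AddMonoidAlgebra.mapDomainRingHom_id

lemma transMap_comp_transMap {k m n : ℕ} (h₁ : n ∣ m) (h₂ : m ∣ k) :
    (transMap R h₁).comp (transMap R h₂) = transMap R (h₁.trans h₂) := by
  rw [transMap, transMap, transMap, ← ZMod.castHom_comp h₁ h₂]
  exact (AddMonoidAlgebra.mapDomainRingHom_comp _ _).symm

end GroupAlgebra

section InverseLimit

variable (R : Type*) [CommRing R] (p : ℕ)

instance Coprimes.neZero (n : Coprimes p) : NeZero n.1 :=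
  ⟨n.2.1.ne'⟩

instance Coprimes.instPreorder : Preorder (Coprimes p) where
  le a b := a.1 ∣ b.1
  le_refl _ := dvd_rfl
  le_trans _ _ _ := dvd_trans

instance Coprimes.instIsDirectedOrder : IsDirectedOrder (Coprimes p) :=
  ⟨fun a b => ⟨⟨a.1 * b.1, Nat.mul_pos a.2.1 b.2.1, Nat.Coprime.mul_left a.2.2 b.2.2⟩,
    dvd_mul_right a.1 b.1, dvd_mul_left b.1 a.1⟩⟩

lemma transMap_ttilde {m n : Coprimes p} (h : n.1 ∣ m.1) :
    transMap R h (ttilde R p m) = ttilde R p n := by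
  rw [ttilde, ttilde, transMap_single, map_one]

lemma aug_ttilde (n : Coprimes p) : aug R n.1 (ttilde R p n) = 1 :=
  aug_single R n.1 1 1

lemma exists_ttilde_sub_one_mul_eq (n : Coprimes p) (v : AddMonoidAlgebra R (ZMod n.1))
    (hv : aug R n.1 v = 0) : ∃ y, (ttilde R p n - 1) * y = v := by
  obtain ⟨y, hy⟩ := single_one_sub_one_dvd_sub_single_aug R n.1 v
  rw [hv, AddMonoidAlgebra.single_zero, sub_zero] at hy
  exact ⟨y, hy.symm⟩

noncomputable def ttildeSubOneSolutions (x : ∀ n : Coprimes p, AddMonoidAlgebra R (ZMod n.1))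
    (hx : IsCompatible R p x) : (Coprimes p)ᵒᵖ ⥤ Type _ where
  obj n := {y : AddMonoidAlgebra R (ZMod n.unop.1) // (ttilde R p n.unop - 1) * y = x n.unop}
  map {m n} f := TypeCat.ofHom fun y => ⟨transMap R (leOfHom f.unop) y.1, by
    have h := congrArg (transMap R (leOfHom f.unop)) y.2
    rwa [map_mul, map_sub, map_one, transMap_ttilde, hx] at h⟩
  map_id n := by
    ext y : 3
    exact Subtype.ext (RingHom.congr_fun (transMap_self R n.unop.1) y.1)
  map_comp f g := by
    ext y : 3
    exact Subtype.ext (RingHom.congr_fun (transMap_comp_transMap R _ _) y.1).symm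

lemma exists_isCompatible_ttilde_sub_one_mul_eq [Finite R]
    (x : ∀ n : Coprimes p, AddMonoidAlgebra R (ZMod n.1)) (hx : IsCompatible R p x)
    (hsol : ∀ n, ∃ y, (ttilde R p n - 1) * y = x n) :
    ∃ y, IsCompatible R p y ∧ x = (ttilde R p - 1) * y := by
  have : ∀ n, Nonempty ((ttildeSubOneSolutions R p x hx).obj n) := fun n =>
    let ⟨y, hy⟩ := hsol n.unop
    ⟨⟨y, hy⟩⟩
  have : ∀ n : (Coprimes p)ᵒᵖ, Finite ((ttildeSubOneSolutions R p x hx).obj n) := fun n =>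
    Subtype.finite
  obtain ⟨u, hu⟩ := nonempty_sections_of_finite_inverse_system (ttildeSubOneSolutions R p x hx)
  exact ⟨fun n => (u (op n)).1, fun m n h => congrArg Subtype.val (hu (homOfLE h).op),
    funext fun n => (u (op n)).2.symm⟩

end InverseLimit

theorem stmt12_general (R : Type*) [CommRing R] [Finite R]
    (p : ℕ)
    (x : ∀ n : Coprimes p, AddMonoidAlgebra R (ZMod n.1))
    (hx : IsCompatible R p x) :
    (∀ n : Coprimes p, aug R n.1 (x n) = 0) ↔
      ∃ y : ∀ n : Coprimes p, AddMonoidAlgebra R (ZMod n.1),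
        IsCompatible R p y ∧ x = (ttilde R p - 1) * y := by
  constructor
  · intro h
    exact exists_isCompatible_ttilde_sub_one_mul_eq R p x hx fun n =>
      exists_ttilde_sub_one_mul_eq R p n (x n) (h n)
  · rintro ⟨y, -, rfl⟩ n
    simp [map_mul, aug_ttilde]

/-- The ideal `(t̃ - 1)·A⁰` is the kernel of the augmentation `ε̂ : A⁰ → R`: for `x ∈ A⁰`
(so the augmentations of all components of `x` agree), `ε̂(x) = 0` iff `x = (t̃ - 1)·y` for
some `y ∈ A⁰`. Here `R` is a finite nonzero commutative `ℤ/ℓ^r`-algebra and `p` is either `1`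
or a prime different from `ℓ`. -/
theorem stmt12 (R : Type*) [CommRing R] [Finite R] [Nontrivial R]
    (ℓ r : ℕ) (hℓ : ℓ.Prime) (hr : 1 ≤ r) (hR : (ℓ : R) ^ r = 0)
    (p : ℕ) (hp : p = 1 ∨ (p.Prime ∧ p ≠ ℓ))
    (x : ∀ n : Coprimes p, AddMonoidAlgebra R (ZMod n.1))
    (hx : IsCompatible R p x) :
    (∀ n : Coprimes p, aug R n.1 (x n) = 0) ↔
      ∃ y : ∀ n : Coprimes p, AddMonoidAlgebra R (ZMod n.1),
        IsCompatible R p y ∧ x = (ttilde R p - 1) * y :=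
  stmt12_general R p x hx
end
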